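/- Under the setting of orthogonal groups of equal size (U_gᵀU_h = 0 for g ≠ h, each U_g having the same number of columns), with T_i = ‖U_{g_i}ᵀ y‖ ordered T₁ > T₂ > ⋯ > T_G > 0, the set {t ≥ 0 : replacing T_s by t preserves the selection order at step s}, i.e. {t ≥ 0 : (η_s t + z_s)ᵀ(P_{g_i} − P_{g_j})(η_s t + z_s) ≥ 0 for all i ≤ j with s ∈ {i,j}}, where η_s = U_{g_s}U_{g_s}ᵀy/T_s and z_s = y − U_{g_s}U_{g_s}ᵀy, equals the interval [T_{s+1}, T_{s−1}] (with T₀ = ∞ and T_{G+1} = 0). -/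

import Mathlib

open Set Matrix

/-- Euclidean dot product on real tuples. -/
def dotp {ι : Type*} [Fintype ι] (v w : ι → ℝ) : ℝ := ∑ i, v i * w i

/-!
For `x = t • η + z`, the quadratic form `xᵀ P_{g_i} x` equals `T_i²` when `i ≠ s` (`η` is
orthogonal to the range of `U_{g_i}`, and `z` differs from `y` by an element of the range of
`U_{g_s}`) and `t²` when `i = s`. So the constraints say that replacing `T_s` by `t` keeps the
sequence decreasing, and since `T` is decreasing only the neighbours `T_{s+1}`, `T_{s-1}` matter.
-/

open Function

lemma dotp_eq_dotProduct {ι : Type*} [Fintype ι] (v w : ι → ℝ) : dotp v w = v ⬝ᵥ w := rfl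

lemma dotp_self_nonneg {ι : Type*} [Fintype ι] (v : ι → ℝ) : 0 ≤ dotp v v :=
  Finset.sum_nonneg fun _ _ => mul_self_nonneg _

section Projection

variable {m l l' : Type*} [Fintype m]

lemma dotProduct_mul_transpose_mulVec [Fintype l] (A : Matrix m l ℝ) (v : m → ℝ) :
    v ⬝ᵥ (A * Aᵀ) *ᵥ v = Aᵀ *ᵥ v ⬝ᵥ Aᵀ *ᵥ v := by
  rw [← mulVec_mulVec, dotProduct_mulVec, ← mulVec_transpose]

lemma transpose_mulVec_smul_add_residual_of_orthogonal [Fintype l'] {A : Matrix m l ℝ}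
    {B : Matrix m l' ℝ} (h : Aᵀ * B = 0) (a : ℝ) (y : m → ℝ) :
    Aᵀ *ᵥ (a • (B * Bᵀ) *ᵥ y + (y - (B * Bᵀ) *ᵥ y)) = Aᵀ *ᵥ y := by
  have hAB : Aᵀ * (B * Bᵀ) = 0 := by rw [← Matrix.mul_assoc, h, Matrix.zero_mul]
  rw [mulVec_add, mulVec_smul, mulVec_sub, mulVec_mulVec, hAB, zero_mulVec, smul_zero, zero_add,
    sub_zero]

lemma transpose_mulVec_smul_add_residual_of_orthonormal [Fintype l] [DecidableEq l]
    {B : Matrix m l ℝ} (h : Bᵀ * B = 1) (a : ℝ) (y : m → ℝ) :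
    Bᵀ *ᵥ (a • (B * Bᵀ) *ᵥ y + (y - (B * Bᵀ) *ᵥ y)) = a • Bᵀ *ᵥ y := by
  have hBB : Bᵀ * (B * Bᵀ) = Bᵀ := by rw [← Matrix.mul_assoc, h, Matrix.one_mul]
  rw [mulVec_add, mulVec_smul, mulVec_sub, mulVec_mulVec, hBB, sub_self, add_zero]

end Projection

lemma Function.update_antitone_at_iff {α β : Type*} [LinearOrder α] [Preorder β] (f : α → β)
    (s : α) (t : β) :
    (∀ i j, i ≤ j → (i = s ∨ j = s) → update f s t j ≤ update f s t i) ↔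
      (∀ j, s < j → f j ≤ t) ∧ ∀ i, i < s → t ≤ f i := by
  constructor
  · intro h
    refine ⟨fun j hj => ?_, fun i hi => ?_⟩
    · simpa [update_of_ne hj.ne'] using h s j hj.le (.inl rfl)
    · simpa [update_of_ne hi.ne] using h i s hi.le (.inr rfl)
  · rintro ⟨hgt, hlt⟩ i j hij (rfl | rfl)
    · rcases hij.eq_or_lt with rfl | hij
      · exact le_rfl
      · simpa [update_of_ne hij.ne'] using hgt j hij
    · rcases hij.eq_or_lt with rfl | hij
      · exact le_rfl
      · simpa [update_of_ne hij.ne] using hlt i hij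

lemma Antitone.fin_forall_gt_le_iff {G : ℕ} {β : Type*} [Preorder β] {f : Fin G → β}
    (hf : Antitone f) (s : Fin G) (t : β) :
    (∀ j, s < j → f j ≤ t) ↔ ∀ h : (s : ℕ) + 1 < G, f ⟨(s : ℕ) + 1, h⟩ ≤ t := by
  refine ⟨fun H h => H _ (Fin.lt_def.2 (Nat.lt_succ_self _)), fun H j hj => ?_⟩
  have hG : (s : ℕ) + 1 < G := lt_of_le_of_lt (Fin.lt_def.1 hj) j.isLt
  have hsucc_le : (⟨_, hG⟩ : Fin G) ≤ j := Fin.le_def.2 (Fin.lt_def.1 hj)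
  exact (hf hsucc_le).trans (H hG)

lemma Antitone.fin_forall_lt_ge_iff {G : ℕ} {β : Type*} [Preorder β] {f : Fin G → β}
    (hf : Antitone f) (s : Fin G) (t : β) :
    (∀ i, i < s → t ≤ f i) ↔
      ∀ _h : 0 < (s : ℕ),
        t ≤ f ⟨(s : ℕ) - 1, lt_of_le_of_lt (Nat.sub_le _ _) s.isLt⟩ := by
  refine ⟨fun H h => H _ (Fin.lt_def.2 (Nat.sub_lt h one_pos)), fun H i hi => ?_⟩
  have hs : 0 < (s : ℕ) := lt_of_le_of_lt (Nat.zero_le _) (Fin.lt_def.1 hi)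
  exact (H hs).trans (hf (Fin.le_def.2 (Nat.le_sub_one_of_lt (Fin.lt_def.1 hi))))

theorem truncation_region_is_neighbor_interval
    {n G k : ℕ}
    (U : Fin G → Matrix (Fin n) (Fin k) ℝ)  -- orthogonal groups of equal size
    (horthonormal : ∀ g, (U g)ᵀ * U g = 1)
    (horth : ∀ g h, g ≠ h → (U g)ᵀ * U h = 0)
    (y : Fin n → ℝ)
    (π : Equiv.Perm (Fin G))  -- selection order: g_i = π i
    (T : Fin G → ℝ)
    (hT : ∀ i, T i = Real.sqrt (dotp ((U (π i))ᵀ.mulVec y) ((U (π i))ᵀ.mulVec y)))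
    (hTpos : ∀ i, 0 < T i)
    (hord : ∀ i j : Fin G, i < j → T j < T i)  -- T₁ > T₂ > ⋯ > T_G > 0
    (P : Fin G → Matrix (Fin n) (Fin n) ℝ)
    (hP : ∀ i, P i = U (π i) * (U (π i))ᵀ)
    (s : Fin G)
    (η z : Fin n → ℝ)
    (hη : η = (T s)⁻¹ • (P s).mulVec y)
    (hz : z = y - (P s).mulVec y) :
    {t : ℝ | 0 ≤ t ∧ ∀ i j : Fin G, i ≤ j → (i = s ∨ j = s) →
        0 ≤ dotp (t • η + z) ((P i - P j).mulVec (t • η + z))}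
    = {t : ℝ | 0 ≤ t
        ∧ (∀ h : (s : ℕ) + 1 < G, T ⟨(s : ℕ) + 1, h⟩ ≤ t)  -- lower limit T_{s+1} (0 if s = G)
        ∧ (∀ _h : 0 < (s : ℕ),
            t ≤ T ⟨(s : ℕ) - 1, lt_of_le_of_lt (Nat.sub_le _ _) s.isLt⟩)} := by
  have hT_sq (i : Fin G) : T i ^ 2 = dotp ((U (π i))ᵀ *ᵥ y) ((U (π i))ᵀ *ᵥ y) := by
    rw [hT i, Real.sq_sqrt (dotp_self_nonneg _)]
  simp only [dotp_eq_dotProduct] at hT_sq ⊢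
  ext t
  simp only [mem_ofPred_eq]
  refine and_congr_right fun ht => ?_
  have hquad (i : Fin G) : (t • η + z) ⬝ᵥ P i *ᵥ (t • η + z) = update T s t i ^ 2 := by
    rw [hη, hz, smul_smul, hP, hP, dotProduct_mul_transpose_mulVec]
    rcases eq_or_ne i s with rfl | hi
    · rw [transpose_mulVec_smul_add_residual_of_orthonormal (horthonormal _),
        dotProduct_smul, smul_dotProduct, ← hT_sq, update_self, smul_eq_mul, smul_eq_mul]
      field_simp [(hTpos i).ne']
    · rw [transpose_mulVec_smul_add_residual_of_orthogonal (horth _ _ (π.injective.ne hi)),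
        ← hT_sq, update_of_ne hi]
  have hupdate_nonneg (i : Fin G) : 0 ≤ update T s t i := by
    rcases eq_or_ne i s with rfl | hi
    · rwa [update_self]
    · rw [update_of_ne hi]; exact (hTpos i).le
  simp only [sub_mulVec, dotProduct_sub, hquad, sub_nonneg,
    sq_le_sq₀ (hupdate_nonneg _) (hupdate_nonneg _)]
  have hanti : Antitone T := StrictAnti.antitone hord
  rw [Function.update_antitone_at_iff, hanti.fin_forall_gt_le_iff, hanti.fin_forall_lt_ge_iff]
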